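/- arXiv:1611.01788 — 2 statements merged into one kernel-verified Lean document; each statement's English description precedes it below -/
import Mathlib

section
/- A subset S of Spec M (the set of prime ideals of a binoid M, with the Zariski topology whose closed sets are V(A) = {p : A ⊆ p}) is closed if and only if it is closed under supersets within Spec M (i.e. p ∈ S, q ∈ Spec M, p ⊆ q implies q ∈ S), and S is open if and only if it is closed under subsets within Spec M. -/
/-- A (commutative) binoid: a commutative additive monoid with an absorbing element `∞`. -/
class Binoid (M : Type*) extends AddCommMonoid M where
  infty : M
  add_infty : ∀ a : M, a + infty = infty

namespace Binoid

variable {M : Type*} [Binoid M]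

/-- `a` is a unit of the binoid `M`. -/
def IsUnitElem (a : M) : Prop := ∃ b : M, a + b = 0

/-- An ideal of a binoid. -/
def IsIdeal (I : Set M) : Prop := (infty : M) ∈ I ∧ ∀ a ∈ I, ∀ b : M, a + b ∈ I

/-- A prime ideal of a binoid: a proper ideal whose complement is closed under addition. -/
def IsPrimeIdeal (p : Set M) : Prop :=
  IsIdeal p ∧ p ≠ Set.univ ∧ ∀ a b : M, a + b ∈ p → a ∈ p ∨ b ∈ p

/-- The ideal `M₊ = M \ M*` of non-units. -/
def plusIdeal (M : Type*) [Binoid M] : Set M := {a : M | ¬ IsUnitElem a}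

/-- The ideal generated by a subset `S` of a binoid. -/
def genIdeal (S : Set M) : Set M :=
  {m : M | m = (infty : M) ∨ ∃ a ∈ S, ∃ b : M, m = a + b}

end Binoid


/-- `M` is finitely generated as a binoid. -/
def Binoid.IsFG (M : Type*) [Binoid M] : Prop :=
  ∃ s : Finset M, AddSubmonoid.closure (s : Set M) = ⊤

/-- The spectrum of a binoid: the set of its prime ideals. -/
def SpecB (M : Type*) [Binoid M] : Type _ := {p : Set M // Binoid.IsPrimeIdeal p}

open Binoid

/-!
Over a finitely generated binoid a prime ideal is determined by the finitely many generators it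
contains, so `Spec M` is finite. A prime ideal containing a finite intersection of ideals contains
one of them (if `a ∈ I \ q`, then `b ∈ J` gives `a + b ∈ I ∩ J ⊆ q`, hence `b ∈ q`). So an upward
closed `S` equals `V(⋂_{p ∈ S} p)`, and open sets are the complements, i.e. the downward closed ones.
-/

namespace Binoid

variable {M : Type*} [Binoid M] {p q : Set M}

theorem IsIdeal.add_mem_left (hI : IsIdeal p) {a : M} (ha : a ∈ p) (b : M) : b + a ∈ p :=
  add_comm a b ▸ hI.2 a ha b

theorem IsIdeal.biInter {ι : Type*} {s : Set ι} {I : ι → Set M} (hI : ∀ i ∈ s, IsIdeal (I i)) :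
    IsIdeal (⋂ i ∈ s, I i) :=
  ⟨Set.mem_biInter fun i hi => (hI i hi).1,
    fun a ha b => Set.mem_biInter fun i hi => (hI i hi).2 a (Set.mem_iInter₂.1 ha i hi) b⟩

theorem IsPrimeIdeal.zero_notMem (hp : IsPrimeIdeal p) : (0 : M) ∉ p := fun h0 =>
  hp.2.1 <| Set.eq_univ_of_forall fun b => zero_add b ▸ hp.1.2 0 h0 b

theorem IsPrimeIdeal.inter_subset (hq : IsPrimeIdeal q) {I J : Set M} (hI : IsIdeal I)
    (hJ : IsIdeal J) (h : I ∩ J ⊆ q) : I ⊆ q ∨ J ⊆ q := by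
  refine or_iff_not_imp_left.2 fun hIq b hb => ?_
  obtain ⟨a, haI, haq⟩ := Set.not_subset.1 hIq
  exact (hq.2.2 a b (h ⟨hI.2 a haI b, hJ.add_mem_left hb a⟩)).resolve_left haq

theorem IsPrimeIdeal.exists_subset_of_biInter_subset (hq : IsPrimeIdeal q) {ι : Type*}
    {s : Set ι} (hs : s.Finite) {I : ι → Set M} (hI : ∀ i ∈ s, IsIdeal (I i))
    (h : ⋂ i ∈ s, I i ⊆ q) : ∃ i ∈ s, I i ⊆ q := by
  induction s, hs using Set.Finite.induction_on with
  | empty => exact absurd (Set.eq_univ_of_univ_subset (by simpa using h)) hq.2.1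
  | @insert a s _ _ ih =>
    rw [Set.biInter_insert] at h
    have hIs : IsIdeal (⋂ i ∈ s, I i) := IsIdeal.biInter fun i hi => hI i (.inr hi)
    rcases hq.inter_subset (hI a (.inl rfl)) hIs h with ha | hs
    · exact ⟨a, .inl rfl, ha⟩
    · obtain ⟨i, hi, hiq⟩ := ih (fun i hi => hI i (.inr hi)) hs
      exact ⟨i, .inr hi, hiq⟩

theorem IsPrimeIdeal.subset_of_inter_subset {s : Set M} (hs : AddSubmonoid.closure s = ⊤)
    (hp : IsPrimeIdeal p) (hq : IsIdeal q) (h : p ∩ s ⊆ q) : p ⊆ q := by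
  intro m hm
  induction (hs ▸ AddSubmonoid.mem_top m : m ∈ AddSubmonoid.closure s)
    using AddSubmonoid.closure_induction with
  | mem x hx => exact h ⟨hm, hx⟩
  | zero => exact absurd hm hp.zero_notMem
  | add x y _ _ ihx ihy =>
    rcases hp.2.2 x y hm with hx | hy
    · exact hq.2 x (ihx hx) y
    · exact hq.add_mem_left (ihy hy) x

end Binoid

namespace SpecB

variable {M : Type*} [Binoid M]

instance : PartialOrder (SpecB M) := inferInstanceAs (PartialOrder {p : Set M // IsPrimeIdeal p})

def zeroLocus (A : Set M) : Set (SpecB M) := {p | A ⊆ p.1}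

theorem isUpperSet_iff {S : Set (SpecB M)} :
    IsUpperSet S ↔ ∀ p ∈ S, ∀ q : SpecB M, p.1 ⊆ q.1 → q ∈ S :=
  ⟨fun h _ hp _ hpq => h hpq hp, fun h _ _ hpq hp => h _ hp _ hpq⟩

theorem isLowerSet_iff {S : Set (SpecB M)} :
    IsLowerSet S ↔ ∀ p ∈ S, ∀ q : SpecB M, q.1 ⊆ p.1 → q ∈ S :=
  ⟨fun h _ hp _ hqp => h hqp hp, fun h _ _ hqp hp => h _ hp _ hqp⟩

theorem finite_of_isFG (hfg : IsFG M) : Finite (SpecB M) := by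
  obtain ⟨s, hs⟩ := hfg
  have hsub : ∀ p q : SpecB M, {x : s | ↑x ∈ p.1} ⊆ {x : s | ↑x ∈ q.1} → p.1 ⊆ q.1 :=
    fun p q h => p.2.subset_of_inter_subset hs q.2.1 fun m hm => h (a := ⟨m, hm.2⟩) hm.1
  exact Finite.of_injective (fun p : SpecB M => {x : s | ↑x ∈ p.1}) fun p q hpq =>
    Subtype.ext <| (hsub p q hpq.le).antisymm (hsub q p hpq.ge)

theorem zeroLocus_biInter_eq [Finite (SpecB M)] {S : Set (SpecB M)} (hS : IsUpperSet S) :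
    zeroLocus (⋂ p ∈ S, p.1) = S := by
  ext q
  refine ⟨fun hq => ?_, fun hq => Set.biInter_subset_of_mem hq⟩
  obtain ⟨p, hpS, hpq⟩ :=
    q.2.exists_subset_of_biInter_subset S.toFinite (fun p _ => p.2.1) hq
  exact hS hpq hpS

theorem exists_eq_zeroLocus_iff [Finite (SpecB M)] {S : Set (SpecB M)} :
    (∃ A, S = zeroLocus A) ↔ IsUpperSet S :=
  ⟨by rintro ⟨A, rfl⟩ p q hpq hp; exact Set.Subset.trans hp hpq,
    fun hS => ⟨_, (zeroLocus_biInter_eq hS).symm⟩⟩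

end SpecB

/-- A subset `S` of `Spec M` is Zariski closed (i.e. of the form `V(A) = {p : A ⊆ p}`) if and
only if it is closed under supersets within `Spec M`; and `S` is Zariski open (the complement of
some `V(A)`) if and only if it is closed under subsets within `Spec M`. -/
theorem zariski_closed_iff_superset_closed (M : Type*) [Binoid M] (hfg : IsFG M)
    (S : Set (SpecB M)) :
    ((∃ A : Set M, S = {p : SpecB M | A ⊆ p.1}) ↔
      ∀ p ∈ S, ∀ q : SpecB M, p.1 ⊆ q.1 → q ∈ S) ∧
    ((∃ A : Set M, S = {p : SpecB M | ¬ A ⊆ p.1}) ↔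
      ∀ p ∈ S, ∀ q : SpecB M, q.1 ⊆ p.1 → q ∈ S) := by
  have := SpecB.finite_of_isFG hfg
  refine ⟨SpecB.exists_eq_zeroLocus_iff.trans SpecB.isUpperSet_iff, ?_⟩
  rw [← SpecB.isLowerSet_iff, ← isUpperSet_compl, ← SpecB.exists_eq_zeroLocus_iff]
  exact exists_congr fun A => by
    rw [← compl_inj_iff, Set.compl_ofPred]
    simp only [not_not]
    rfl
end

section
/- Let R be a commutative ring and A, B ideals of R with A ∩ B = 0. Then the sequence of unit groups 1 → R* → (R/A)* × (R/B)* → (R/(A+B))* is exact, where the first map is f ↦ (f mod A, f mod B) and the second is (g, h) ↦ g·h⁻¹; moreover if R is local the second map is surjective. More precisely, a pair (g, h) of units agreeing modulo A + B lifts to a unit of the localization R_P at every prime P, giving a short exact sequence of sheaves 1 → O*_X → i_*O*_Y ⊕ i_*O*_Z → i_*O*_{Y∩Z} → 1 on X = Spec R with Y = Spec R/A, Z = Spec R/B. -/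
open Ideal

/-! The kernel of `R → R ⧸ A × R ⧸ B` is `A ⊓ B = 0`. In the middle, lifts `x` of `g` and `y` of `h`
differ by `a + b ∈ A + B`, so `x - a = y + b` lifts both; it is a unit because `A ⊓ B = 0` forces
`A` or `B` to be proper, and reduction modulo a proper ideal of a local ring reflects units. The
same fact makes `Rˣ → (R ⧸ (A + B))ˣ` surjective, so the second map is surjective with `h = 1`. -/

namespace Ideal

variable {R : Type*} [CommRing R]

theorem injective_mk_prod_mk_of_inf_eq_bot {A B : Ideal R} (hAB : A ⊓ B = ⊥) :
    Function.Injective (fun r : R => (Quotient.mk A r, Quotient.mk B r)) := by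
  intro r s hrs
  obtain ⟨hA, hB⟩ := Prod.mk.inj hrs
  have hmem : r - s ∈ A ⊓ B := ⟨Quotient.eq.mp hA, Quotient.eq.mp hB⟩
  rw [hAB, mem_bot] at hmem
  exact sub_eq_zero.mp hmem

theorem units_map_factor_units_map_mk {I J : Ideal R} (hIJ : I ≤ J) (u : Rˣ) :
    Units.map (Quotient.factor hIJ).toMonoidHom (Units.map (Quotient.mk I).toMonoidHom u) =
      Units.map (Quotient.mk J).toMonoidHom u :=
  Units.ext (Quotient.factor_mk hIJ u)

theorem Quotient.exists_mk_eq_and_mk_eq {A B : Ideal R} {g : R ⧸ A} {h : R ⧸ B}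
    (hgh : Quotient.factor (le_sup_left : A ≤ A + B) g =
      Quotient.factor (le_sup_right : B ≤ A + B) h) :
    ∃ z : R, Quotient.mk A z = g ∧ Quotient.mk B z = h := by
  obtain ⟨x, rfl⟩ := Quotient.mk_surjective g
  obtain ⟨y, rfl⟩ := Quotient.mk_surjective h
  rw [Quotient.factor_mk, Quotient.factor_mk, Quotient.eq] at hgh
  obtain ⟨a, ha, b, hb, hab⟩ := Submodule.mem_sup.mp hgh
  refine ⟨x - a, Quotient.eq.mpr (by simpa using A.neg_mem ha), Quotient.eq.mpr ?_⟩
  rwa [show x - a - y = b by linear_combination -hab]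

variable [IsLocalRing R]

theorem isUnit_of_isUnit_quotientMk {I : Ideal R} (hI : I ≠ ⊤) {x : R}
    (hx : IsUnit (Quotient.mk I x)) : IsUnit x :=
  haveI := Quotient.nontrivial_iff.mpr hI
  haveI := IsLocalHom.of_surjective (Quotient.mk I) Quotient.mk_surjective
  isUnit_of_map_unit _ _ hx

theorem units_map_quotientMk_surjective (I : Ideal R) :
    Function.Surjective (Units.map (Quotient.mk I).toMonoidHom) := by
  rcases eq_or_ne I ⊤ with rfl | hI
  · have := Quotient.subsingleton_iff.mpr (rfl : (⊤ : Ideal R) = ⊤)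
    exact fun _ => ⟨1, Subsingleton.elim _ _⟩
  · have := Quotient.nontrivial_iff.mpr hI
    exact IsLocalRing.surjective_units_map_of_local_ringHom _ Quotient.mk_surjective
      (IsLocalHom.of_surjective _ Quotient.mk_surjective)

theorem isUnit_of_inf_eq_bot {A B : Ideal R} (hAB : A ⊓ B = ⊥) {x : R}
    (hxA : IsUnit (Quotient.mk A x)) (hxB : IsUnit (Quotient.mk B x)) : IsUnit x := by
  by_cases hA : A = ⊤
  · rw [hA, top_inf_eq] at hAB
    exact isUnit_of_isUnit_quotientMk (hAB ▸ bot_ne_top) hxB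
  · exact isUnit_of_isUnit_quotientMk hA hxA

end Ideal

/-- **Units of a ring glued from two closed pieces.**
Let `R` be a commutative ring and `A, B` ideals with `A ∩ B = 0` (so
`Spec R = Spec R/A ∪ Spec R/B`).  Then the sequence of unit groups
`1 → R* → (R/A)* × (R/B)* → (R/(A+B))*` is exact, where the first map is
`f ↦ (f mod A, f mod B)` and the second is `(g, h) ↦ g·h⁻¹`:
the first map is injective, the composite is trivial, and — if `R` is local (as is the case
for each localization `R_P` at a prime, which is what yields the short exact sequence of
sheaves `1 → O*_X → i_*O*_Y ⊕ i_*O*_Z → i_*O*_{Y∩Z} → 1`) — a pair `(g, h)` of units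
agreeing modulo `A + B` lifts to a unit of `R`, and the second map is surjective. -/
theorem units_sequence_of_trivial_intersection (R : Type*) [CommRing R]
    (A B : Ideal R) (hAB : A ⊓ B = ⊥) :
    Function.Injective (fun f : Rˣ =>
      (Units.map (Ideal.Quotient.mk A).toMonoidHom f,
       Units.map (Ideal.Quotient.mk B).toMonoidHom f)) ∧
    (∀ f : Rˣ,
      Units.map (Ideal.Quotient.factor (le_sup_left : A ≤ A + B)).toMonoidHom
          (Units.map (Ideal.Quotient.mk A).toMonoidHom f) *
        (Units.map (Ideal.Quotient.factor (le_sup_right : B ≤ A + B)).toMonoidHom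
          (Units.map (Ideal.Quotient.mk B).toMonoidHom f))⁻¹ = 1) ∧
    (IsLocalRing R →
      ∀ (g : (R ⧸ A)ˣ) (h : (R ⧸ B)ˣ),
        Units.map (Ideal.Quotient.factor (le_sup_left : A ≤ A + B)).toMonoidHom g =
          Units.map (Ideal.Quotient.factor (le_sup_right : B ≤ A + B)).toMonoidHom h →
        ∃ f : Rˣ, Units.map (Ideal.Quotient.mk A).toMonoidHom f = g ∧
          Units.map (Ideal.Quotient.mk B).toMonoidHom f = h) ∧
    (IsLocalRing R →
      ∀ u : (R ⧸ (A + B))ˣ, ∃ (g : (R ⧸ A)ˣ) (h : (R ⧸ B)ˣ),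
        Units.map (Ideal.Quotient.factor (le_sup_left : A ≤ A + B)).toMonoidHom g *
          (Units.map (Ideal.Quotient.factor (le_sup_right : B ≤ A + B)).toMonoidHom h)⁻¹ = u) := by
  refine ⟨?_, ?_, ?_, ?_⟩
  · intro f f' hff'
    obtain ⟨hA, hB⟩ := Prod.mk.inj hff'
    exact Units.ext <| injective_mk_prod_mk_of_inf_eq_bot hAB <|
      Prod.ext (congrArg Units.val hA) (congrArg Units.val hB)
  · intro f
    rw [units_map_factor_units_map_mk, units_map_factor_units_map_mk, mul_inv_cancel]
  · intro _ g h hgh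
    obtain ⟨z, hzA, hzB⟩ := Ideal.Quotient.exists_mk_eq_and_mk_eq (congrArg Units.val hgh)
    have hz : IsUnit z := isUnit_of_inf_eq_bot hAB (hzA ▸ g.isUnit) (hzB ▸ h.isUnit)
    exact ⟨hz.unit, Units.ext hzA, Units.ext hzB⟩
  · intro _ u
    obtain ⟨v, rfl⟩ := units_map_quotientMk_surjective (A + B) u
    refine ⟨Units.map (Ideal.Quotient.mk A).toMonoidHom v, 1, ?_⟩
    rw [map_one, inv_one, mul_one, units_map_factor_units_map_mk]
    rfl
end
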